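/- Under the setup T = H V_k V_kᵀ L⁺ with k ≤ rank(L), if τ ≥ 0 and ε ≥ 0 satisfy ‖Hx‖² ≤ τ‖Lx‖² + ε‖x‖² for all x, then the operator norm of H − TL satisfies ‖H − TL‖² ≤ τ σ_{k+1}² + ε, where σ_{k+1} is the (k+1)st largest singular value of L (taken as 0 if k = rank(L)). -/

import Mathlib

open Matrix

noncomputable def enorm {n : ℕ} (x : Fin n → ℝ) : ℝ := Real.sqrt (∑ i, x i ^ 2)

noncomputable def opNorm {m n : ℕ} (A : Matrix (Fin m) (Fin n) ℝ) : ℝ :=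
  sSup {t : ℝ | ∃ x : Fin n → ℝ, _root_.enorm x ≤ 1 ∧ t = _root_.enorm (A.mulVec x)}

noncomputable def lamMax {n : ℕ} (A : Matrix (Fin n) (Fin n) ℝ) : ℝ :=
  sSup (spectrum ℝ A)

structure SVD (m N : ℕ) (L : Matrix (Fin m) (Fin N) ℝ) where
  U : Matrix (Fin m) (Fin m) ℝ
  V : Matrix (Fin N) (Fin N) ℝ
  s : ℕ → ℝ
  hU : Uᵀ * U = 1
  hV : Vᵀ * V = 1
  hs_nonneg : ∀ j, 0 ≤ s j
  hs_anti : ∀ i j : ℕ, i ≤ j → s j ≤ s i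
  hs_zero : ∀ j : ℕ, L.rank < j → s j = 0
  hL : L = U * (Matrix.of fun (i : Fin m) (j : Fin N) => if (i : ℕ) = (j : ℕ) then s ((i : ℕ) + 1) else 0) * Vᵀ

def IsMoorePenrose {m N : ℕ} (L : Matrix (Fin m) (Fin N) ℝ)
    (Lp : Matrix (Fin N) (Fin m) ℝ) : Prop :=
  L * Lp * L = L ∧ Lp * L * Lp = Lp ∧ (L * Lp)ᵀ = L * Lp ∧ (Lp * L)ᵀ = Lp * L

def IsSelection {N r : ℕ} (S : Matrix (Fin N) (Fin r) ℝ) : Prop :=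
  ∃ f : Fin r → Fin N, Function.Injective f ∧ S = Matrix.of fun i j => if i = f j then 1 else 0

/-!
The first `k ≤ rank L` singular values are nonzero, so the columns of `V_k` lie in the row space
of `L`, which `L⁺ L` fixes. Hence `P L⁺ L = P` for `P = V_k V_kᵀ`, and `H - T L = H (I - P)`.
Applying the hypothesis to `y = (I - P) x` bounds `‖(H - T L) x‖²` by `τ ‖L y‖² + ε ‖y‖²`. In the
basis of right singular vectors `I - P` deletes the first `k` coordinates, so `‖y‖ ≤ ‖x‖`, and
`L` scales each remaining coordinate by at most `σ_{k+1}`, so `‖L y‖ ≤ σ_{k+1} ‖x‖`.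
-/

theorem Fin.sum_ite_val_eq {M : Type*} [AddCommMonoid M] (b i : ℕ) (x : M) :
    ∑ j : Fin b, (if (j : ℕ) = i then x else 0) = if i < b then x else 0 := by
  rw [Fin.sum_univ_eq_sum_range (fun j => if j = i then x else 0), Finset.sum_ite_eq']
  simp

namespace Matrix

/-- Indexing the diagonal by `ℕ` lets diagonal factors of different shapes share one sequence,
as `Σ` does in `SVD.hL`. -/
def rectDiagonal {R : Type*} [Zero R] {a b : ℕ} (d : ℕ → R) : Matrix (Fin a) (Fin b) R :=
  of fun i j => if (i : ℕ) = j then d i else 0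

variable {R : Type*} {a b c : ℕ}

@[simp]
theorem rectDiagonal_apply [Zero R] (d : ℕ → R) (i : Fin a) (j : Fin b) :
    rectDiagonal d i j = if (i : ℕ) = j then d i else 0 := rfl

theorem rectDiagonal_transpose [Zero R] (d : ℕ → R) :
    (rectDiagonal d : Matrix (Fin a) (Fin b) R)ᵀ = rectDiagonal d := by
  ext i j
  simp only [transpose_apply, rectDiagonal_apply]
  split_ifs with h h' h' <;> simp_all

theorem rectDiagonal_self [Zero R] (d : ℕ → R) :
    (rectDiagonal d : Matrix (Fin a) (Fin a) R) = diagonal fun i : Fin a => d i := by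
  ext i j
  simp only [rectDiagonal_apply, diagonal_apply, Fin.val_inj]

theorem rectDiagonal_congr [Zero R] {d e : ℕ → R} (h : ∀ n < b, d n = e n) :
    (rectDiagonal d : Matrix (Fin a) (Fin b) R) = rectDiagonal e := by
  ext i j
  simp only [rectDiagonal_apply]
  split_ifs with hij
  · exact h _ (hij ▸ j.isLt)
  · rfl

theorem rectDiagonal_mul_rectDiagonal [NonUnitalNonAssocSemiring R] (d e : ℕ → R) :
    (rectDiagonal d : Matrix (Fin a) (Fin b) R) * (rectDiagonal e : Matrix (Fin b) (Fin c) R) =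
      rectDiagonal fun n => if n < b then d n * e n else 0 := by
  ext i l
  have hterm : ∀ j : Fin b, (if (i : ℕ) = j then d i else 0) * (if (j : ℕ) = l then e j else 0) =
      if (j : ℕ) = i then (if (i : ℕ) = l then d i * e i else 0) else 0 := by
    intro j
    split_ifs <;> simp_all
  simp only [mul_apply, rectDiagonal_apply, hterm, Fin.sum_ite_val_eq]
  split_ifs <;> rfl

theorem submatrix_castLE_eq_mul_rectDiagonal [NonAssocSemiring R] (A : Matrix (Fin a) (Fin b) R)
    (h : c ≤ b) :
    A.submatrix id (Fin.castLE h) = A * (rectDiagonal (fun _ => 1) : Matrix (Fin b) (Fin c) R) := by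
  ext i j
  rw [mul_apply, Finset.sum_eq_single (Fin.castLE h j)]
  · simp
  · intro l _ hl
    have : (l : ℕ) ≠ j := fun hlj => hl (Fin.ext hlj)
    simp [this]
  · simp

theorem rank_rectDiagonal_le [CommSemiring R] [StrongRankCondition R] {r : ℕ} {d : ℕ → R}
    (hd : ∀ n, r ≤ n → d n = 0) :
    (rectDiagonal d : Matrix (Fin a) (Fin b) R).rank ≤ r := by
  have hfac : (rectDiagonal d : Matrix (Fin a) (Fin b) R) =
      (rectDiagonal d : Matrix (Fin a) (Fin r) R) *
        (rectDiagonal (fun _ => 1) : Matrix (Fin r) (Fin b) R) := by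
    rw [rectDiagonal_mul_rectDiagonal]
    refine rectDiagonal_congr fun n _ => ?_
    split_ifs with hn
    · rw [mul_one]
    · exact hd n (not_lt.mp hn)
  calc (rectDiagonal d : Matrix (Fin a) (Fin b) R).rank
      ≤ (rectDiagonal d : Matrix (Fin a) (Fin r) R).rank := hfac ▸ rank_mul_le_left _ _
    _ ≤ r := (rank_le_card_width _).trans_eq (Fintype.card_fin r)

end Matrix

theorem enorm_sq {n : ℕ} (x : Fin n → ℝ) : _root_.enorm x ^ 2 = x ⬝ᵥ x := by
  rw [_root_.enorm, Real.sq_sqrt (by positivity), dotProduct]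
  simp only [sq]

theorem dotProduct_transpose_mul_mulVec {ι κ R : Type*} [Fintype ι] [Fintype κ] [CommSemiring R]
    (A : Matrix ι κ R) (x : κ → R) : x ⬝ᵥ ((Aᵀ * A) *ᵥ x) = (A *ᵥ x) ⬝ᵥ (A *ᵥ x) := by
  rw [← mulVec_mulVec, dotProduct_mulVec, vecMul_transpose]

theorem enorm_mulVec_sq {m n : ℕ} (A : Matrix (Fin m) (Fin n) ℝ) (x : Fin n → ℝ) :
    _root_.enorm (A *ᵥ x) ^ 2 = x ⬝ᵥ ((Aᵀ * A) *ᵥ x) := by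
  rw [enorm_sq, dotProduct_transpose_mul_mulVec]

theorem dotProduct_diagonal_mulVec_le {ι : Type*} [Fintype ι] [DecidableEq ι] {w : ι → ℝ} {b : ℝ}
    (hw : ∀ i, w i ≤ b) (z : ι → ℝ) : z ⬝ᵥ (diagonal w *ᵥ z) ≤ b * (z ⬝ᵥ z) := by
  simp only [mulVec_diagonal, dotProduct, Finset.mul_sum]
  refine Finset.sum_le_sum fun i _ => ?_
  nlinarith [hw i, mul_self_nonneg (z i)]

theorem dotProduct_conj_diagonal_mulVec_le {ι : Type*} [Fintype ι] [DecidableEq ι]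
    {V : Matrix ι ι ℝ} (hV : V * Vᵀ = 1) {w : ι → ℝ} {b : ℝ} (hw : ∀ i, w i ≤ b) (x : ι → ℝ) :
    x ⬝ᵥ ((V * diagonal w * Vᵀ) *ᵥ x) ≤ b * (x ⬝ᵥ x) := by
  have hconj : x ⬝ᵥ ((V * diagonal w * Vᵀ) *ᵥ x) = (Vᵀ *ᵥ x) ⬝ᵥ (diagonal w *ᵥ (Vᵀ *ᵥ x)) := by
    rw [Matrix.mul_assoc, ← mulVec_mulVec, dotProduct_mulVec, ← mulVec_transpose, mulVec_mulVec]
  have hnorm : (Vᵀ *ᵥ x) ⬝ᵥ (Vᵀ *ᵥ x) = x ⬝ᵥ x := by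
    rw [← dotProduct_transpose_mul_mulVec, transpose_transpose, hV, one_mulVec]
  rw [hconj, ← hnorm]
  exact dotProduct_diagonal_mulVec_le hw _

theorem opNorm_sq_le {m n : ℕ} {A : Matrix (Fin m) (Fin n) ℝ} {C : ℝ} (hC : 0 ≤ C)
    (h : ∀ x, _root_.enorm (A *ᵥ x) ^ 2 ≤ C * _root_.enorm x ^ 2) : opNorm A ^ 2 ≤ C := by
  have hbound : opNorm A ≤ Real.sqrt C := by
    refine Real.sSup_le ?_ (Real.sqrt_nonneg C)
    rintro t ⟨x, hx, rfl⟩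
    refine Real.le_sqrt_of_sq_le ((h x).trans ?_)
    have : _root_.enorm x ^ 2 ≤ 1 := pow_le_one₀ (Real.sqrt_nonneg _) hx
    nlinarith
  have hnonneg : 0 ≤ opNorm A := Real.sSup_nonneg fun t ⟨_, _, ht⟩ => ht ▸ Real.sqrt_nonneg _
  calc opNorm A ^ 2 ≤ Real.sqrt C ^ 2 := pow_le_pow_left₀ hnonneg hbound 2
    _ = C := Real.sq_sqrt hC

theorem IsMoorePenrose.pinv_mul_mul_transpose {m n : ℕ} {L : Matrix (Fin m) (Fin n) ℝ}
    {Lp : Matrix (Fin n) (Fin m) ℝ} (hLp : IsMoorePenrose L Lp) : Lp * L * Lᵀ = Lᵀ := by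
  obtain ⟨hLLpL, -, -, hsymm⟩ := hLp
  rw [← hsymm, ← transpose_mul, ← Matrix.mul_assoc, hLLpL]

theorem IsMoorePenrose.mul_transpose_mul_pinv_mul {m n k : ℕ} {L : Matrix (Fin m) (Fin n) ℝ}
    {Lp : Matrix (Fin n) (Fin m) ℝ} (hLp : IsMoorePenrose L Lp) {W : Matrix (Fin n) (Fin k) ℝ}
    {B : Matrix (Fin m) (Fin k) ℝ} (hW : W = Lᵀ * B) : W * Wᵀ * (Lp * L) = W * Wᵀ := by
  have hfix : Lp * L * W = W := by rw [hW, ← Matrix.mul_assoc, hLp.pinv_mul_mul_transpose]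
  rw [Matrix.mul_assoc, ← hLp.2.2.2, ← transpose_mul, hfix]

theorem conj_mul_conj_mul_conj {ι R : Type*} [Fintype ι] [DecidableEq ι] [CommSemiring R]
    {V : Matrix ι ι R} (hV : Vᵀ * V = 1) (A B C : Matrix ι ι R) :
    V * A * Vᵀ * (V * B * Vᵀ) * (V * C * Vᵀ) = V * (A * B * C) * Vᵀ := by
  simp only [Matrix.mul_assoc, ← Matrix.mul_assoc Vᵀ V, hV, Matrix.one_mul]

theorem enorm_mulVec_conj_diagonal_mulVec_sq_le {p n : ℕ} {V : Matrix (Fin n) (Fin n) ℝ}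
    (hV : Vᵀ * V = 1) {A : Matrix (Fin p) (Fin n) ℝ} {g c : Fin n → ℝ}
    (hA : Aᵀ * A = V * diagonal g * Vᵀ) {b : ℝ} (hb : ∀ i, c i * g i * c i ≤ b) (x : Fin n → ℝ) :
    _root_.enorm (A *ᵥ ((V * diagonal c * Vᵀ) *ᵥ x)) ^ 2 ≤ b * _root_.enorm x ^ 2 := by
  have hsymm : (V * diagonal c * Vᵀ)ᵀ = V * diagonal c * Vᵀ := by
    simp only [transpose_mul, transpose_transpose, diagonal_transpose, Matrix.mul_assoc]
  have hgram : (A * (V * diagonal c * Vᵀ))ᵀ * (A * (V * diagonal c * Vᵀ)) =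
      V * diagonal (fun i => c i * g i * c i) * Vᵀ := by
    rw [transpose_mul, hsymm, Matrix.mul_assoc, ← Matrix.mul_assoc Aᵀ, hA, ← Matrix.mul_assoc,
      conj_mul_conj_mul_conj hV, diagonal_mul_diagonal, diagonal_mul_diagonal]
  rw [mulVec_mulVec, enorm_mulVec_sq, hgram, enorm_sq]
  exact dotProduct_conj_diagonal_mulVec_le (mul_eq_one_comm.mp hV) hb x

namespace SVD

variable {m N : ℕ} {L : Matrix (Fin m) (Fin N) ℝ} (svd : SVD m N L)

def sigma : Matrix (Fin m) (Fin N) ℝ :=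
  rectDiagonal fun n => svd.s (n + 1)

theorem eq_U_mul_sigma_mul : L = svd.U * svd.sigma * svd.Vᵀ :=
  svd.hL

theorem transpose_mul_self :
    Lᵀ * L = svd.V * diagonal (fun i : Fin N => if (i : ℕ) < m then svd.s (i + 1) * svd.s (i + 1)
      else 0) * svd.Vᵀ := by
  conv_lhs => rw [svd.eq_U_mul_sigma_mul]
  rw [transpose_mul, transpose_mul, transpose_transpose, sigma, rectDiagonal_transpose]
  simp only [Matrix.mul_assoc, ← Matrix.mul_assoc svd.Uᵀ, svd.hU, Matrix.one_mul]
  rw [← Matrix.mul_assoc _ _ svd.Vᵀ, rectDiagonal_mul_rectDiagonal, rectDiagonal_self]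

theorem s_pos {j : ℕ} (hj : 1 ≤ j) (hjr : j ≤ L.rank) : 0 < svd.s j := by
  refine (svd.hs_nonneg j).lt_of_ne' fun hzero => ?_
  have hvanish : ∀ n, j - 1 ≤ n → svd.s (n + 1) = 0 := fun n hn =>
    le_antisymm (hzero ▸ svd.hs_anti j (n + 1) (by omega)) (svd.hs_nonneg _)
  have hrank : L.rank ≤ j - 1 :=
    calc L.rank ≤ (svd.U * svd.sigma).rank := by
          conv_lhs => rw [svd.eq_U_mul_sigma_mul]
          exact rank_mul_le_left _ _
      _ ≤ svd.sigma.rank := rank_mul_le_right _ _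
      _ ≤ j - 1 := rank_rectDiagonal_le hvanish
  omega

theorem exists_leading_eq_transpose_mul {k : ℕ} (hk : k ≤ L.rank) (hkN : k ≤ N) :
    ∃ B : Matrix (Fin m) (Fin k) ℝ, svd.V.submatrix id (Fin.castLE hkN) = Lᵀ * B := by
  have hkm : k ≤ m := hk.trans (rank_le_height L)
  -- `Σᵀ Σ_k⁻¹` is the inclusion of the first `k` coordinates since `σ_1, …, σ_k ≠ 0`.
  refine ⟨svd.U * (rectDiagonal fun n => (svd.s (n + 1))⁻¹ : Matrix (Fin m) (Fin k) ℝ), ?_⟩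
  have hLU : Lᵀ * svd.U = svd.V * svd.sigmaᵀ := by
    have hLt : Lᵀ = svd.V * svd.sigmaᵀ * svd.Uᵀ := by
      conv_lhs => rw [svd.eq_U_mul_sigma_mul]
      rw [transpose_mul, transpose_mul, transpose_transpose, Matrix.mul_assoc]
    rw [hLt, Matrix.mul_assoc, svd.hU, Matrix.mul_one]
  rw [← Matrix.mul_assoc, hLU, Matrix.mul_assoc, sigma, rectDiagonal_transpose,
    rectDiagonal_mul_rectDiagonal, submatrix_castLE_eq_mul_rectDiagonal]
  congr 1
  refine rectDiagonal_congr fun n hn => ?_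
  rw [if_pos (by omega), mul_inv_cancel₀ (svd.s_pos (by omega) (by omega)).ne']

theorem V_mul_transpose : svd.V * svd.Vᵀ = 1 :=
  mul_eq_one_comm.mp svd.hV

theorem one_sub_leading_mul_transpose {k : ℕ} (hkN : k ≤ N) :
    1 - svd.V.submatrix id (Fin.castLE hkN) * (svd.V.submatrix id (Fin.castLE hkN))ᵀ =
      svd.V * diagonal (fun i : Fin N => if (i : ℕ) < k then 0 else 1) * svd.Vᵀ := by
  have hcompl : diagonal (fun i : Fin N => if (i : ℕ) < k then (0 : ℝ) else 1) =
      1 - diagonal fun i : Fin N => if (i : ℕ) < k then 1 * 1 else 0 := by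
    rw [← diagonal_one, diagonal_sub]
    congr 1
    ext i
    split_ifs <;> norm_num
  rw [submatrix_castLE_eq_mul_rectDiagonal, transpose_mul, rectDiagonal_transpose,
    Matrix.mul_assoc, ← Matrix.mul_assoc (rectDiagonal _), rectDiagonal_mul_rectDiagonal,
    rectDiagonal_self, hcompl, Matrix.mul_sub, Matrix.sub_mul, Matrix.mul_one, svd.V_mul_transpose,
    Matrix.mul_assoc]

theorem enorm_one_sub_leading_mulVec_sq_le {k : ℕ} (hkN : k ≤ N) (x : Fin N → ℝ) :
    _root_.enorm ((1 - svd.V.submatrix id (Fin.castLE hkN) *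
      (svd.V.submatrix id (Fin.castLE hkN))ᵀ) *ᵥ x) ^ 2 ≤ _root_.enorm x ^ 2 := by
  have hgram : (1 : Matrix (Fin N) (Fin N) ℝ)ᵀ * 1 = svd.V * diagonal (fun _ => 1) * svd.Vᵀ := by
    rw [transpose_one, Matrix.mul_one, diagonal_one, Matrix.mul_one, svd.V_mul_transpose]
  have hweight : ∀ i : Fin N, (if (i : ℕ) < k then 0 else 1) * 1 * (if (i : ℕ) < k then 0 else 1)
      ≤ (1 : ℝ) := fun i => by split_ifs <;> norm_num
  simpa only [svd.one_sub_leading_mul_transpose, one_mulVec, one_mul] using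
    enorm_mulVec_conj_diagonal_mulVec_sq_le svd.hV hgram hweight x

theorem enorm_mulVec_one_sub_leading_mulVec_sq_le {k : ℕ} (hkN : k ≤ N) (x : Fin N → ℝ) :
    _root_.enorm (L *ᵥ ((1 - svd.V.submatrix id (Fin.castLE hkN) *
      (svd.V.submatrix id (Fin.castLE hkN))ᵀ) *ᵥ x)) ^ 2 ≤
      svd.s (k + 1) ^ 2 * _root_.enorm x ^ 2 := by
  rw [svd.one_sub_leading_mul_transpose]
  refine enorm_mulVec_conj_diagonal_mulVec_sq_le svd.hV svd.transpose_mul_self (fun i => ?_) x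
  by_cases hik : (i : ℕ) < k
  · simpa [hik] using sq_nonneg (svd.s (k + 1))
  · have hgi : (if (i : ℕ) < m then svd.s (i + 1) * svd.s (i + 1) else 0) ≤ svd.s (k + 1) ^ 2 := by
      split_ifs
      · have hanti := svd.hs_anti (k + 1) (i + 1) (by omega)
        nlinarith [svd.hs_nonneg (i + 1)]
      · exact sq_nonneg _
    simpa [hik] using hgi

end SVD

theorem stmt4 {M m N k : ℕ} (H : Matrix (Fin M) (Fin N) ℝ) (L : Matrix (Fin m) (Fin N) ℝ)
    (svd : SVD m N L) (hk : k ≤ L.rank) (hkN : k ≤ N)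
    (Lp : Matrix (Fin N) (Fin m) ℝ) (hLp : IsMoorePenrose L Lp)
    (τ ε : ℝ) (hτ : 0 ≤ τ) (hε : 0 ≤ ε)
    (hτε : ∀ x : Fin N → ℝ,
      _root_.enorm (H.mulVec x) ^ 2 ≤ τ * _root_.enorm (L.mulVec x) ^ 2 + ε * _root_.enorm x ^ 2) :
    let Vk : Matrix (Fin N) (Fin k) ℝ := svd.V.submatrix id (Fin.castLE hkN)
    let T : Matrix (Fin M) (Fin m) ℝ := H * (Vk * Vkᵀ) * Lp
    opNorm (H - T * L) ^ 2 ≤ τ * svd.s (k + 1) ^ 2 + ε := by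
  intro Vk T
  obtain ⟨B, hB⟩ := svd.exists_leading_eq_transpose_mul hk hkN
  have hresidual : H - T * L = H * (1 - Vk * Vkᵀ) := by
    rw [Matrix.mul_sub, Matrix.mul_one, Matrix.mul_assoc, Matrix.mul_assoc,
      hLp.mul_transpose_mul_pinv_mul hB]
  refine opNorm_sq_le (by positivity) fun x => ?_
  calc _root_.enorm ((H - T * L) *ᵥ x) ^ 2 = _root_.enorm (H *ᵥ ((1 - Vk * Vkᵀ) *ᵥ x)) ^ 2 := by
        rw [hresidual, mulVec_mulVec]
    _ ≤ τ * _root_.enorm (L *ᵥ ((1 - Vk * Vkᵀ) *ᵥ x)) ^ 2 +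
          ε * _root_.enorm ((1 - Vk * Vkᵀ) *ᵥ x) ^ 2 := hτε _
    _ ≤ τ * (svd.s (k + 1) ^ 2 * _root_.enorm x ^ 2) + ε * _root_.enorm x ^ 2 := by
        gcongr τ * ?_ + ε * ?_
        · exact svd.enorm_mulVec_one_sub_leading_mulVec_sq_le hkN x
        · exact svd.enorm_one_sub_leading_mulVec_sq_le hkN x
    _ = (τ * svd.s (k + 1) ^ 2 + ε) * _root_.enorm x ^ 2 := by ring
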